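/- arXiv:2007.09018 — 2 statements merged into one kernel-verified Lean document; each statement's English description precedes it below -/
import Mathlib

section
/- Let G be a finite undirected multigraph, let s, t ∈ V(G) with s ≠ t, let Z ⊆ E(G), and let λ* be a positive integer. Then Z admits a λ*-flow-augmenting multiset of vertex pairs compatible with Z if and only if Z does not contain an (s,t)-cut of cardinality less than λ*. -/
/-!
A finite undirected multigraph (parallel edges allowed, no loops) is modelled by a
vertex type `V`, an edge type `E` (both finite) and an endpoint map `ends : E → Sym2 V`
such that no edge is a loop (`¬ (ends e).IsDiag`).
-/

namespace FlowAug

variable {V E : Type}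

/-- Two vertices are adjacent in `G - X` if some edge outside `X` joins them. -/
def Adj (ends : E → Sym2 V) (X : Set E) (u v : V) : Prop :=
  ∃ e, e ∉ X ∧ ends e = s(u, v)

/-- Reachability in `G - X`. -/
def Reach (ends : E → Sym2 V) (X : Set E) : V → V → Prop :=
  Relation.ReflTransGen (Adj ends X)

/-- `R_S(X)` : the set of vertices reachable from the vertex set `S` in `G - X`. -/
def RS (ends : E → Sym2 V) (X : Set E) (S : Set V) : Set V :=
  {v | ∃ u ∈ S, Reach ends X u v}

/-- `δ(S)` : the set of edges with exactly one endpoint in `S`. -/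
def edgeBoundary (ends : E → Sym2 V) (S : Set V) : Set E :=
  {e | ∃ u v, ends e = s(u, v) ∧ u ∈ S ∧ v ∉ S}

/-- `X` is an `(S,T)`-cut. -/
def IsCut (ends : E → Sym2 V) (X : Set E) (S T : Set V) : Prop :=
  RS ends X S ∩ RS ends X T = ∅

/-- `X` is a minimal `(S,T)`-cut: no proper subset of `X` is an `(S,T)`-cut. -/
def IsMinimalCut (ends : E → Sym2 V) (X : Set E) (S T : Set V) : Prop :=
  IsCut ends X S T ∧ ∀ Y : Set E, Y ⊂ X → ¬ IsCut ends Y S T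

/-- `X` is an `(S,T)`-cut of minimum cardinality. -/
def IsMinimumCut (ends : E → Sym2 V) (X : Set E) (S T : Set V) : Prop :=
  IsCut ends X S T ∧ ∀ Y : Set E, IsCut ends Y S T → X.ncard ≤ Y.ncard

/-- `X` is an `(S,T)`-cut that is closest to `S`: every `(S,T)`-cut `X' ≠ X` with
`R_S(X') ⊆ R_S(X)` satisfies `|X'| > |X|`. -/
def IsClosestCut (ends : E → Sym2 V) (X : Set E) (S T : Set V) : Prop :=
  IsCut ends X S T ∧
    ∀ X' : Set E, IsCut ends X' S T → X' ≠ X →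
      RS ends X' S ⊆ RS ends X S → X.ncard < X'.ncard

/-- `λ_G(s,t)` : the minimum cardinality of an `(s,t)`-cut (equivalently, by Menger's
theorem, the maximum number of pairwise edge-disjoint `(s,t)`-paths). -/
noncomputable def lamCut (ends : E → Sym2 V) (s t : V) : ℕ :=
  sInf {n | ∃ X : Set E, IsCut ends X {s} {t} ∧ X.ncard = n}

/-- `Z_{s,t}` : the edges of `Z` with one endpoint in `R_s(Z)` and one in `R_t(Z)`. -/
def Zst (ends : E → Sym2 V) (s t : V) (Z : Set E) : Set E :=
  {e | e ∈ Z ∧ ∃ u v, ends e = s(u, v) ∧ u ∈ RS ends Z {s} ∧ v ∈ RS ends Z {t}}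

/-- `Z` is a special `(s,t)`-cut: `Z` is an `(s,t)`-cut and `Z_{s,t}` is an `(s,t)`-cut. -/
def IsSpecial (ends : E → Sym2 V) (s t : V) (Z : Set E) : Prop :=
  IsCut ends Z {s} {t} ∧ IsCut ends (Zst ends s t Z) {s} {t}

/-- `Z` is eligible for `(s,t)`: special, and every edge of `Z` has its endpoints in
different connected components of `G - Z`. -/
def IsEligible (ends : E → Sym2 V) (s t : V) (Z : Set E) : Prop :=
  IsSpecial ends s t Z ∧ ∀ e ∈ Z, ∀ u v : V, ends e = s(u, v) → ¬ Reach ends Z u v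

/-- `Z` is a star `(s,t)`-cut: an `(s,t)`-cut each of whose edges has exactly one
endpoint in `R_s(Z)`. -/
def IsStarCut (ends : E → Sym2 V) (s t : V) (Z : Set E) : Prop :=
  IsCut ends Z {s} {t} ∧
    ∀ e ∈ Z, ∃ u v : V, ends e = s(u, v) ∧ u ∈ RS ends Z {s} ∧ v ∉ RS ends Z {s}

/-- A path from `s` to `t` in the multigraph described by `ends`, given by its
sequence of vertices and traversed edges. -/
structure MGPath (V E : Type) (ends : E → Sym2 V) (s t : V) where
  n : ℕ
  vert : Fin (n + 1) → V
  edge : Fin n → E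
  vert_zero : vert 0 = s
  vert_last : vert (Fin.last n) = t
  ends_eq : ∀ i : Fin n, ends (edge i) = s(vert i.castSucc, vert i.succ)

/-- A family of paths is (pairwise) edge-disjoint: no edge is used twice, neither on
a single path nor on two different paths. -/
def EdgeDisjoint {ends : E → Sym2 V} {s t : V} {k : ℕ}
    (P : Fin k → MGPath V E ends s t) : Prop :=
  Function.Injective fun p : (Σ i : Fin k, Fin (P i).n) => (P p.1).edge p.2

/-- `P` is a witnessing `(s,t)`-flow for `Z`: a family of `λ_G(s,t)` pairwise
edge-disjoint `(s,t)`-paths such that every edge of `Z_{s,t}` occurs on a path of `P`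
and every path of `P` contains exactly one edge of `Z`. -/
def IsWitnessingFlow (ends : E → Sym2 V) (s t : V) (Z : Set E) {k : ℕ}
    (P : Fin k → MGPath V E ends s t) : Prop :=
  k = lamCut ends s t ∧ EdgeDisjoint P ∧
    (∀ e ∈ Zst ends s t Z, ∃ (i : Fin k) (j : Fin (P i).n), (P i).edge j = e) ∧
    ∀ i : Fin k, ∃! j : Fin (P i).n, (P i).edge j ∈ Z

/-- The vertices occurring on the paths of a family `P`. -/
def pathVerts {ends : E → Sym2 V} {s t : V} {k : ℕ}
    (P : Fin k → MGPath V E ends s t) : Set V :=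
  {v | ∃ (i : Fin k) (m : Fin ((P i).n + 1)), (P i).vert m = v}

/-- The edges occurring on the paths of a family `P`. -/
def pathEdges {ends : E → Sym2 V} {s t : V} {k : ℕ}
    (P : Fin k → MGPath V E ends s t) : Set E :=
  {e | ∃ (i : Fin k) (j : Fin (P i).n), (P i).edge j = e}

/-- The arcs obtained by orienting every edge of every path of `P` in the forward
direction (from `s` towards `t`). -/
def DirAdjOnFlow {ends : E → Sym2 V} {s t : V} {k : ℕ}
    (P : Fin k → MGPath V E ends s t) (u v : V) : Prop :=
  ∃ (i : Fin k) (l : Fin (P i).n), (P i).vert l.castSucc = u ∧ (P i).vert l.succ = v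

/-- `N[S]` : the closed neighborhood of `S`. -/
def closedNbhd (ends : E → Sym2 V) (S : Set V) : Set V :=
  S ∪ {v | ∃ u ∈ S, ∃ e : E, ends e = s(u, v)}

/-- `X` is the minimum `(s,t)`-cut closest to `s` among all minimum `(s,t)`-cuts
satisfying the property `P`. -/
def IsClosestMinCutAmong (ends : E → Sym2 V) (s t : V) (P : Set E → Prop)
    (X : Set E) : Prop :=
  IsMinimumCut ends X {s} {t} ∧ P X ∧
    ∀ Y : Set E, IsMinimumCut ends Y {s} {t} → P Y → Y ≠ X →
      RS ends Y {s} ⊆ RS ends X {s} → X.ncard < Y.ncard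

/-- `C 0, …, C p` is the canonical sequence of non-crossing minimum `(s,t)`-cuts:
`C 0` is the unique minimum `(s,t)`-cut closest to `s`; `C i` is the unique minimum
`(s,t)`-cut closest to `s` among all minimum `(s,t)`-cuts `X` with
`N[R_s(C (i-1))] ⊆ R_s(X)`; and `p` is the largest index for which such a cut exists. -/
def CanonSeq (ends : E → Sym2 V) (s t : V) (p : ℕ) (C : ℕ → Set E) : Prop :=
  IsClosestMinCutAmong ends s t (fun _ => True) (C 0) ∧
    (∀ i : ℕ, 0 < i → i ≤ p →
      IsClosestMinCutAmong ends s t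
        (fun X => closedNbhd ends (RS ends (C (i - 1)) {s}) ⊆ RS ends X {s}) (C i)) ∧
    ¬ ∃ X : Set E, IsMinimumCut ends X {s} {t} ∧
        closedNbhd ends (RS ends (C p) {s}) ⊆ RS ends X {s}

/-- The blocks `V_0, …, V_{p+1}` associated with the canonical sequence of cuts. -/
def blockOf (ends : E → Sym2 V) (s : V) (p : ℕ) (C : ℕ → Set E) (i : ℕ) : Set V :=
  if i = 0 then RS ends (C 0) {s}
  else if i ≤ p then RS ends (C i) {s} \ RS ends (C (i - 1)) {s}
  else Set.univ \ RS ends (C p) {s}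

/-- Adjacency inside the induced subgraph `G[B]`. -/
def AdjIn (ends : E → Sym2 V) (B : Set V) (u v : V) : Prop :=
  u ∈ B ∧ v ∈ B ∧ ∃ e : E, ends e = s(u, v)

/-- Reachability inside the induced subgraph `G[B]`. -/
def ReachIn (ends : E → Sym2 V) (B : Set V) : V → V → Prop :=
  Relation.ReflTransGen (AdjIn ends B)

/-- The induced subgraph `G[B]` is connected. -/
def ConnIn (ends : E → Sym2 V) (B : Set V) : Prop :=
  ∀ u ∈ B, ∀ v ∈ B, ReachIn ends B u v

/-- The connected component of `u` in the induced subgraph `G[B]`. -/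
def compIn (ends : E → Sym2 V) (B : Set V) (u : V) : Set V :=
  {v | v ∈ B ∧ ReachIn ends B u v}

/-- The set of connected components of the induced subgraph `G[B]`. -/
def componentsIn (ends : E → Sym2 V) (B : Set V) : Set (Set V) :=
  {K | ∃ u ∈ B, K = compIn ends B u}

/-- The union of the blocks `V_a, …, V_b`. -/
def unionBlocks (ends : E → Sym2 V) (s : V) (p : ℕ) (C : ℕ → Set E)
    (a b : ℕ) : Set V :=
  ⋃ j ∈ Set.Icc a b, blockOf ends s p C j

/-- `st` encodes the decomposition of the blocks `V_0, …, V_{p+1}` into bundles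
`W_0, …, W_{q+1}`: bundle `W_i` consists of the blocks `V_{st i}, …, V_{st (i+1) - 1}`.
`W_0 = V_0`, and each further bundle is greedily either a single connected block, or a
maximal union of contiguous blocks inducing a disconnected subgraph. -/
def IsBundleSeq (ends : E → Sym2 V) (s : V) (p : ℕ) (C : ℕ → Set E)
    (q : ℕ) (st : ℕ → ℕ) : Prop :=
  st 0 = 0 ∧ st 1 = 1 ∧ st (q + 2) = p + 2 ∧
    (∀ i j : ℕ, i < j → j ≤ q + 2 → st i < st j) ∧
    ∀ i : ℕ, 1 ≤ i → i ≤ q + 1 →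
      (st (i + 1) = st i + 1 ∧ ConnIn ends (blockOf ends s p C (st i))) ∨
      (¬ ConnIn ends (blockOf ends s p C (st i)) ∧
        ¬ ConnIn ends (unionBlocks ends s p C (st i) (st (i + 1) - 1)) ∧
        ∀ j : ℕ, st (i + 1) - 1 < j → j ≤ p + 1 →
          ConnIn ends (unionBlocks ends s p C (st i) j))

/-- The bundle `W_i`. -/
def bundleOf (ends : E → Sym2 V) (s : V) (p : ℕ) (C : ℕ → Set E) (st : ℕ → ℕ)
    (i : ℕ) : Set V :=
  unionBlocks ends s p C (st i) (st (i + 1) - 1)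

/-- `C'_i` : the cut (among `C_0, …, C_p`) separating bundle `W_i` from `W_{i+1}`. -/
def interCut (C : ℕ → Set E) (st : ℕ → ℕ) (i : ℕ) : Set E :=
  C (st (i + 1) - 1)

/-- A bundle `W` is unaffected by `Z` if `N[W]` is contained in a single connected
component of `G - Z`. -/
def Unaffected (ends : E → Sym2 V) (Z : Set E) (W : Set V) : Prop :=
  ∀ u ∈ closedNbhd ends W, ∀ v ∈ closedNbhd ends W, Reach ends Z u v

/-- The stretch `W_{a,b} = W_a ∪ ⋯ ∪ W_b` of bundles. -/
def stretchSet (ends : E → Sym2 V) (s : V) (p : ℕ) (C : ℕ → Set E) (st : ℕ → ℕ)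
    (a b : ℕ) : Set V :=
  ⋃ i ∈ Set.Icc a b, bundleOf ends s p C st i

/-- The left interface of a stretch starting at bundle `W_a`. -/
def leftInterface (ends : E → Sym2 V) (s : V) (p : ℕ) (C : ℕ → Set E) (st : ℕ → ℕ)
    (a : ℕ) : Set V :=
  if a = 0 then {s}
  else {v | v ∈ bundleOf ends s p C st a ∧ ∃ e ∈ interCut C st (a - 1), v ∈ ends e}

/-- The right interface of a stretch ending at bundle `W_b`. -/
def rightInterface (ends : E → Sym2 V) (s t : V) (p : ℕ) (C : ℕ → Set E)
    (st : ℕ → ℕ) (q b : ℕ) : Set V :=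
  if b = q + 1 then {t}
  else {v | v ∈ bundleOf ends s p C st b ∧ ∃ e ∈ interCut C st b, v ∈ ends e}

/-- `W_{a,b}` is a maximal stretch of bundles all affected by `Z`. -/
def MaxAffStretch (ends : E → Sym2 V) (s : V) (p : ℕ) (C : ℕ → Set E)
    (st : ℕ → ℕ) (q : ℕ) (Z : Set E) (a b : ℕ) : Prop :=
  a ≤ b ∧ b ≤ q + 1 ∧
    (∀ i : ℕ, a ≤ i → i ≤ b → ¬ Unaffected ends Z (bundleOf ends s p C st i)) ∧
    (a = 0 ∨ Unaffected ends Z (bundleOf ends s p C st (a - 1))) ∧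
    (b = q + 1 ∨ Unaffected ends Z (bundleOf ends s p C st (b + 1)))

/-- `W_{a,b}` is a maximal stretch of bundles affected by `Z` containing both a vertex
reachable from `s` and a vertex reachable from `t` in `G - Z`. -/
def StronglyAffStretch (ends : E → Sym2 V) (s t : V) (p : ℕ) (C : ℕ → Set E)
    (st : ℕ → ℕ) (q : ℕ) (Z : Set E) (a b : ℕ) : Prop :=
  MaxAffStretch ends s p C st q Z a b ∧
    (stretchSet ends s p C st a b ∩ RS ends Z {s}).Nonempty ∧
    (stretchSet ends s p C st a b ∩ RS ends Z {t}).Nonempty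

/-- Adjacency inside the induced subgraph `G[B]` avoiding the edge set `X`. -/
def AdjInX (ends : E → Sym2 V) (B : Set V) (X : Set E) (u v : V) : Prop :=
  u ∈ B ∧ v ∈ B ∧ ∃ e, e ∉ X ∧ ends e = s(u, v)

/-- Reachability inside `G[B] - X`. -/
def ReachInX (ends : E → Sym2 V) (B : Set V) (X : Set E) : V → V → Prop :=
  Relation.ReflTransGen (AdjInX ends B X)

/-- `X` is a star `(a,b)`-cut of the induced subgraph `H = G[B]`: in `H - X` no path
connects `a` and `b`, and every edge of `X` has exactly one endpoint reachable from
`a` in `H - X`. -/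
def IsStarCutIn (ends : E → Sym2 V) (B : Set V) (a b : V) (X : Set E) : Prop :=
  ¬ ReachInX ends B X a b ∧
    ∀ e ∈ X, ∃ u v : V, ends e = s(u, v) ∧
      ReachInX ends B X a u ∧ ¬ ReachInX ends B X a v

end FlowAug

/-!
Augmenting pairs compatible with `Z` join vertices already connected in `G - Z`, hence in
`G - C` for every `C ⊆ Z`; so an `(s,t)`-cut `C ⊆ Z` of `G` stays an `(s,t)`-cut of `G + A`.
Conversely, let `A` consist of `λ*` parallel copies of every edge outside `Z`. A set `X` of
fewer than `λ*` edges of `G + A` leaves a copy of each of those edges, so if `X` is an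
`(s,t)`-cut of `G + A`, then so is `X ∩ Z` in `G`, an `(s,t)`-cut inside `Z` of size at most
`|X|`.
-/

namespace FlowAug

section Cuts

variable {V E E' : Type} {ends : E → Sym2 V} {ends' : E' → Sym2 V}

theorem Reach.mono {X Y : Set E} (hXY : X ⊆ Y) {u v : V} (h : Reach ends Y u v) :
    Reach ends X u v :=
  Relation.ReflTransGen.mono (fun _ _ ⟨e, he, hee⟩ => ⟨e, fun heX => he (hXY heX), hee⟩) _ _ h

theorem Reach.lift {X : Set E} {X' : Set E'}
    (h : ∀ u v, Adj ends X u v → Reach ends' X' u v) {u v : V} (huv : Reach ends X u v) :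
    Reach ends' X' u v :=
  Relation.reflTransGen_closed h _ _ huv

theorem IsCut.of_reach_imp {X : Set E} {X' : Set E'} {S T : Set V}
    (h : ∀ u v, Reach ends X u v → Reach ends' X' u v) (hX' : IsCut ends' X' S T) :
    IsCut ends X S T := by
  have hRS : ∀ U, RS ends X U ⊆ RS ends' X' U := fun _ w ⟨u, hu, huw⟩ => ⟨u, hu, h u w huw⟩
  exact Set.subset_eq_empty (Set.inter_subset_inter (hRS S) (hRS T)) hX'

theorem eq_of_reach_univ {u v : V} (h : Reach ends Set.univ u v) : u = v := by
  induction h with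
  | refl => rfl
  | tail _ hadj _ => exact absurd (Set.mem_univ _) hadj.choose_spec.1

theorem isCut_univ {s t : V} (hst : s ≠ t) : IsCut ends Set.univ {s} {t} := by
  refine Set.eq_empty_iff_forall_notMem.mpr fun w ⟨⟨_, rfl, hsw⟩, ⟨_, rfl, htw⟩⟩ => hst ?_
  exact (eq_of_reach_univ hsw).trans (eq_of_reach_univ htw).symm

theorem lamCut_le_ncard {s t : V} {X : Set E} (hX : IsCut ends X {s} {t}) :
    lamCut ends s t ≤ X.ncard :=
  Nat.sInf_le ⟨X, hX, rfl⟩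

theorem le_lamCut_iff {s t : V} (hst : s ≠ t) {k : ℕ} :
    k ≤ lamCut ends s t ↔ ∀ X : Set E, IsCut ends X {s} {t} → k ≤ X.ncard := by
  refine ⟨fun hk X hX => hk.trans (lamCut_le_ncard hX), fun h => ?_⟩
  refine le_csInf ⟨_, Set.univ, isCut_univ hst, rfl⟩ ?_
  rintro _ ⟨X, hX, rfl⟩
  exact h X hX

end Cuts

section Augmentation

variable {V E ι : Type} {ends : E → Sym2 V} {a : ι → Sym2 V}

theorem Reach.of_reach_sumElim {C : Set E} (ha : ∀ i u v, a i = s(u, v) → Reach ends C u v)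
    {u v : V} (h : Reach (Sum.elim ends a) (Sum.inl '' C) u v) : Reach ends C u v := by
  refine Reach.lift (fun x y ⟨f, hf, hfxy⟩ => ?_) h
  cases f with
  | inl e => exact Relation.ReflTransGen.single ⟨e, fun he => hf ⟨e, he, rfl⟩, hfxy⟩
  | inr i => exact ha i x y hfxy

theorem lamCut_sumElim_le_ncard {s t : V} {Z C : Set E}
    (ha : ∀ i u v, a i = s(u, v) → Reach ends Z u v) (hCZ : C ⊆ Z)
    (hC : IsCut ends C {s} {t}) : lamCut (Sum.elim ends a) s t ≤ C.ncard :=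
  calc lamCut (Sum.elim ends a) s t ≤ (Sum.inl '' C : Set (E ⊕ ι)).ncard :=
        lamCut_le_ncard <| hC.of_reach_imp fun _ _ =>
          Reach.of_reach_sumElim fun i u v hi => (ha i u v hi).mono hCZ
    _ = C.ncard := Set.ncard_image_of_injective _ Sum.inl_injective

theorem le_lamCut_sumElim_of_copies [Finite E] [Finite ι] {s t : V} (hst : s ≠ t) {Z : Set E}
    {k : ℕ} (hcopies : ∀ e ∉ Z, ∃ f : Fin k → ι, f.Injective ∧ ∀ j, a (f j) = ends e)
    (hZ : ∀ C ⊆ Z, IsCut ends C {s} {t} → k ≤ C.ncard) :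
    k ≤ lamCut (Sum.elim ends a) s t := by
  refine (le_lamCut_iff hst).mpr fun X hX => ?_
  by_contra! hXk
  have hsurvive : ∀ e ∉ Z, ∃ i, Sum.inr i ∉ X ∧ a i = ends e := by
    intro e he
    obtain ⟨f, hf, hfe⟩ := hcopies e he
    have hrange : X.ncard < (Set.range (Sum.inr ∘ f : Fin k → E ⊕ ι)).ncard := by
      rwa [Set.ncard_range_of_injective (Sum.inr_injective.comp hf), Nat.card_eq_fintype_card,
        Fintype.card_fin]
    obtain ⟨_, ⟨j, rfl⟩, hj⟩ := Set.exists_mem_notMem_of_ncard_lt_ncard hrange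
    exact ⟨f j, hj, hfe j⟩
  set C : Set E := {e ∈ Z | Sum.inl e ∈ X}
  have hbypass : ∀ u v, Adj ends C u v → Reach (Sum.elim ends a) X u v := by
    rintro u v ⟨e, heC, huv⟩
    by_cases heX : Sum.inl e ∈ X
    · obtain ⟨i, hiX, hie⟩ := hsurvive e fun heZ => heC ⟨heZ, heX⟩
      exact Relation.ReflTransGen.single ⟨Sum.inr i, hiX, hie.trans huv⟩
    · exact Relation.ReflTransGen.single ⟨Sum.inl e, heX, huv⟩
  have hCX : C.ncard ≤ X.ncard := by
    rw [← Set.ncard_image_of_injective C Sum.inl_injective]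
    exact Set.ncard_le_ncard (by rintro _ ⟨e, he, rfl⟩; exact he.2)
  have hC : IsCut ends C {s} {t} := hX.of_reach_imp fun _ _ => Reach.lift hbypass
  exact absurd (hZ C (fun _ he => he.1) hC) (by omega)

end Augmentation

/-- The multiset `A` is modelled as a family `a : Fin m → Sym2 V` of vertex pairs; `G + A` is
the multigraph with edge type `E ⊕ Fin m` and endpoint map `Sum.elim ends a`. -/
theorem flowAugmenting_iff_no_small_cut_inside_general {V E : Type} [Fintype E]
    (ends : E → Sym2 V)
    (s t : V) (hst : s ≠ t)
    (Z : Set E) (lamStar : ℕ) :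
    (∃ (m : ℕ) (a : Fin m → Sym2 V),
        (∀ (i : Fin m) (u v : V), a i = s(u, v) → Reach ends Z u v) ∧
        lamStar ≤ lamCut (Sum.elim ends a) s t) ↔
      ¬ ∃ C : Set E, C ⊆ Z ∧ IsCut ends C {s} {t} ∧ C.ncard < lamStar := by
  classical
  constructor
  · rintro ⟨m, a, ha, hlam⟩ ⟨C, hCZ, hC, hCcard⟩
    exact absurd (hlam.trans (lamCut_sumElim_le_ncard ha hCZ hC)) (by omega)
  · intro hno
    push Not at hno
    let g := Fintype.equivFin (Fin lamStar × {e // e ∉ Z})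
    refine ⟨_, fun i => ends (g.symm i).2, fun i u v hi =>
      Relation.ReflTransGen.single ⟨_, (g.symm i).2.2, hi⟩, le_lamCut_sumElim_of_copies hst ?_ hno⟩
    intro e he
    refine ⟨fun j => g (j, ⟨e, he⟩), fun j j' hjj' => ?_, fun j => by simp⟩
    simpa using g.injective hjj'

/-- An edge set `Z` admits a `λ*`-flow-augmenting multiset of vertex
pairs compatible with `Z` if and only if `Z` does not contain an `(s,t)`-cut of
cardinality less than `λ*`.  The multiset `A` is modelled as a family
`a : Fin m → Sym2 V` of vertex pairs; `G + A` is the multigraph with edge type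
`E ⊕ Fin m` and endpoint map `Sum.elim ends a`. -/
theorem flowAugmenting_iff_no_small_cut_inside {V E : Type} [Fintype V] [Fintype E]
    (ends : E → Sym2 V) (hloop : ∀ e, ¬ (ends e).IsDiag)
    (s t : V) (hst : s ≠ t)
    (Z : Set E) (lamStar : ℕ) (hpos : 0 < lamStar) :
    (∃ (m : ℕ) (a : Fin m → Sym2 V),
        (∀ (i : Fin m) (u v : V), a i = s(u, v) → Reach ends Z u v) ∧
        lamStar ≤ lamCut (Sum.elim ends a) s t) ↔
      ¬ ∃ C : Set E, C ⊆ Z ∧ IsCut ends C {s} {t} ∧ C.ncard < lamStar :=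
  flowAugmenting_iff_no_small_cut_inside_general ends s t hst Z lamStar

end FlowAug
end

section
/- Let G be a connected finite undirected multigraph with s, t ∈ V(G), s ≠ t, let λ = λ_G(s,t), let C_0, …, C_p and V_0, …, V_{p+1} be the canonical sequence of minimum (s,t)-cuts and the blocks of G, and let P_1, …, P_λ be pairwise edge-disjoint (s,t)-paths, each viewed as directed from s to t. Then for every j, each cut C_i contains exactly one edge of P_j, these edges appear along P_j in the order C_0, C_1, …, C_p, and they partition P_j into subpaths P_j^0, …, P_j^{p+1} such that all vertices of P_j^i lie in the block V_i, for every i ∈ {0,…,p+1}. -/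
namespace FlowAug


section Aux
variable {V E : Type}

lemma mem_RS_singleton {ends : E → Sym2 V} {X : Set E} {a v : V} :
    v ∈ RS ends X {a} ↔ Reach ends X a v := by
  simp [RS]

lemma not_mem_RS_t {ends : E → Sym2 V} {X : Set E} {s t : V}
    (h : IsCut ends X {s} {t}) : t ∉ RS ends X {s} := by
  intro ht
  have htt : t ∈ RS ends X {t} := ⟨t, rfl, Relation.ReflTransGen.refl⟩
  exact Set.eq_empty_iff_forall_notMem.mp h t ⟨ht, htt⟩

lemma ncard_eq_lamCut {ends : E → Sym2 V} {s t : V} {X : Set E}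
    (h : IsMinimumCut ends X {s} {t}) : X.ncard = lamCut ends s t := by
  have hne : {n | ∃ Y : Set E, IsCut ends Y {s} {t} ∧ Y.ncard = n}.Nonempty :=
    ⟨X.ncard, X, h.1, rfl⟩
  have h1 : lamCut ends s t ≤ X.ncard := Nat.sInf_le ⟨X, h.1, rfl⟩
  obtain ⟨Y, hY, hYc⟩ := Nat.sInf_mem hne
  have h2 := h.2 Y hY
  unfold lamCut at h1 ⊢
  omega

lemma reach_along {ends : E → Sym2 V} {s t : V} (Q : MGPath V E ends s t) (X : Set E) :
    ∀ a b : ℕ, (hab : a ≤ b) → (hb : b ≤ Q.n) →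
      (∀ l : Fin Q.n, a ≤ (l : ℕ) → (l : ℕ) < b → Q.edge l ∉ X) →
      Reach ends X (Q.vert ⟨a, by omega⟩) (Q.vert ⟨b, by omega⟩) := by
  intro a b hab
  induction b, hab using Nat.le_induction with
  | base => intro _ _; exact Relation.ReflTransGen.refl
  | succ b hab ih =>
    intro hb hX
    have hlt : b < Q.n := by omega
    refine (ih (by omega) (fun l hl1 hl2 => hX l hl1 (by omega))).tail ?_
    exact ⟨Q.edge ⟨b, hlt⟩, hX ⟨b, hlt⟩ hab (Nat.lt_succ_self b), Q.ends_eq ⟨b, hlt⟩⟩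

end Aux

/-- Let `C 0, …, C p` be the canonical sequence of minimum `(s,t)`-cuts
of a connected multigraph `G` and `V_0, …, V_{p+1}` the corresponding blocks, and let
`P` be a family of `λ = λ_G(s,t)` pairwise edge-disjoint `(s,t)`-paths.  Then for each
path `P j` there are positions `pos 0 < pos 1 < ⋯ < pos p` such that the edge of `P j`
at position `pos i` is the unique edge of `P j` in the cut `C i` (so the cut edges
appear in the order of the cuts), and every vertex of `P j` lies in the block `V_i`
where `i` is the number of cut edges occurring strictly before it on the path (i.e.
the cut edges partition `P j` into subpaths `P_j^0, …, P_j^{p+1}` with `P_j^i ⊆ V_i`). -/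
theorem canonicalCuts_partition_flowPaths {V E : Type} [Fintype V] [Fintype E]
    (ends : E → Sym2 V) (hloop : ∀ e, ¬ (ends e).IsDiag)
    (hconn : ∀ u v : V, Reach ends (∅ : Set E) u v)
    (s t : V) (hst : s ≠ t)
    (p : ℕ) (C : ℕ → Set E) (hC : CanonSeq ends s t p C)
    (P : Fin (lamCut ends s t) → MGPath V E ends s t)
    (hP : EdgeDisjoint P) :
    ∀ j : Fin (lamCut ends s t),
      ∃ pos : Fin (p + 1) → Fin (P j).n,
        StrictMono pos ∧
        (∀ i : Fin (p + 1), (P j).edge (pos i) ∈ C (i : ℕ)) ∧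
        (∀ (i : Fin (p + 1)) (l : Fin (P j).n), (P j).edge l ∈ C (i : ℕ) → l = pos i) ∧
        ∀ m : Fin ((P j).n + 1),
          (P j).vert m ∈
            blockOf ends s p C {i : Fin (p + 1) | (pos i : ℕ) < (m : ℕ)}.ncard := by
  classical
  intro j
  -- basic facts about the cuts
  have hmin : ∀ i : ℕ, i ≤ p → IsMinimumCut ends (C i) {s} {t} := by
    intro i hi
    rcases Nat.eq_zero_or_pos i with h0 | h0
    · subst h0; exact hC.1.1
    · exact (hC.2.1 i h0 hi).1
  have hcut : ∀ i : ℕ, i ≤ p → IsCut ends (C i) {s} {t} := fun i hi => (hmin i hi).1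
  have hcard : ∀ i : ℕ, i ≤ p → (C i).ncard = lamCut ends s t :=
    fun i hi => ncard_eq_lamCut (hmin i hi)
  have hstep : ∀ i : ℕ, 0 < i → i ≤ p →
      closedNbhd ends (RS ends (C (i - 1)) {s}) ⊆ RS ends (C i) {s} :=
    fun i h0 hi => (hC.2.1 i h0 hi).2.1
  have hmono : ∀ a b : ℕ, a ≤ b → b ≤ p →
      RS ends (C a) {s} ⊆ RS ends (C b) {s} := by
    intro a b hab
    induction b, hab using Nat.le_induction with
    | base => intro _; exact subset_rfl
    | succ b hab ih =>
      intro hb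
      have h2 : closedNbhd ends (RS ends (C b) {s}) ⊆ RS ends (C (b + 1)) {s} := by
        simpa using hstep (b + 1) (by omega) hb
      exact (ih (by omega)).trans (fun v hv => h2 (Set.mem_union_left _ hv))
  have hnb : ∀ a b : ℕ, a < b → b ≤ p →
      closedNbhd ends (RS ends (C a) {s}) ⊆ RS ends (C b) {s} := by
    intro a b hab hb
    have h1 : closedNbhd ends (RS ends (C a) {s}) ⊆ RS ends (C (a + 1)) {s} := by
      simpa using hstep (a + 1) (by omega) (by omega)
    exact h1.trans (hmono (a + 1) b (by omega) hb)
  -- every path contains at least one edge of each cut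
  have hex : ∀ (i : ℕ), i ≤ p → ∀ j' : Fin (lamCut ends s t),
      ∃ l : Fin (P j').n, (P j').edge l ∈ C i := by
    intro i hi j'
    by_contra hno
    push_neg at hno
    have hr := reach_along (P j') (C i) 0 (P j').n (Nat.zero_le _) le_rfl
      (fun l _ _ => hno l)
    have h0 : ((⟨0, by omega⟩ : Fin ((P j').n + 1))) = 0 := by ext; simp
    have hl : ((⟨(P j').n, by omega⟩ : Fin ((P j').n + 1))) = Fin.last _ := by ext; simp
    rw [h0, hl, (P j').vert_zero, (P j').vert_last] at hr
    exact not_mem_RS_t (hcut i hi) (mem_RS_singleton.mpr hr)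
  -- counting: each path contains exactly one edge of each cut
  have huni : ∀ (i : ℕ), i ≤ p → ∃! l : Fin (P j).n, (P j).edge l ∈ C i := by
    intro i hi
    have hpos : ∀ j'' : Fin (lamCut ends s t),
        1 ≤ (Finset.univ.filter (fun l : Fin (P j'').n => (P j'').edge l ∈ C i)).card := by
      intro j''
      obtain ⟨l, hl⟩ := hex i hi j''
      exact Finset.card_pos.mpr ⟨l, by simp [hl]⟩
    have hsum : ∑ j'' : Fin (lamCut ends s t),
        (Finset.univ.filter (fun l : Fin (P j'').n => (P j'').edge l ∈ C i)).card
        ≤ lamCut ends s t := by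
      have hinj : Set.InjOn
          (fun x : (Σ j'' : Fin (lamCut ends s t), Fin (P j'').n) => (P x.1).edge x.2)
          ((Finset.univ.sigma
            (fun j'' => Finset.univ.filter
              (fun l : Fin (P j'').n => (P j'').edge l ∈ C i))) : Finset _) :=
        fun x _ y _ h => hP h
      have hmaps : ∀ x ∈ (Finset.univ.sigma
            (fun j'' => Finset.univ.filter
              (fun l : Fin (P j'').n => (P j'').edge l ∈ C i))),
          (P x.1).edge x.2 ∈ (C i).toFinset := by
        intro x hx
        rw [Finset.mem_sigma] at hx
        have := hx.2
        simp at this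
        simpa using this
      calc ∑ j'' : Fin (lamCut ends s t),
            (Finset.univ.filter (fun l : Fin (P j'').n => (P j'').edge l ∈ C i)).card
          = (Finset.univ.sigma
            (fun j'' => Finset.univ.filter
              (fun l : Fin (P j'').n => (P j'').edge l ∈ C i))).card :=
            (Finset.card_sigma _ _).symm
        _ ≤ (C i).toFinset.card := Finset.card_le_card_of_injOn _ hmaps hinj
        _ = (C i).ncard := (Set.ncard_eq_toFinset_card' _).symm
        _ = lamCut ends s t := hcard i hi
    have h1 : (Finset.univ.filter (fun l : Fin (P j).n => (P j).edge l ∈ C i)).card = 1 := by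
      by_contra hne
      have h2 : 2 ≤ (Finset.univ.filter (fun l : Fin (P j).n => (P j).edge l ∈ C i)).card := by
        have := hpos j; omega
      have hlt : ∑ j'' : Fin (lamCut ends s t), (1 : ℕ)
          < ∑ j'' : Fin (lamCut ends s t),
            (Finset.univ.filter (fun l : Fin (P j'').n => (P j'').edge l ∈ C i)).card :=
        Finset.sum_lt_sum (fun x _ => hpos x) ⟨j, Finset.mem_univ _, by omega⟩
      simp only [Finset.sum_const, Finset.card_univ, Fintype.card_fin, smul_eq_mul,
        mul_one] at hlt
      omega
    obtain ⟨l, hl⟩ := Finset.card_eq_one.mp h1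
    refine ⟨l, ?_, ?_⟩
    · have : l ∈ (Finset.univ.filter (fun l : Fin (P j).n => (P j).edge l ∈ C i)) := by
        rw [hl]; exact Finset.mem_singleton_self l
      simpa using this
    · intro l' hl'
      have : l' ∈ (Finset.univ.filter (fun l : Fin (P j).n => (P j).edge l ∈ C i)) := by
        simp [hl']
      rw [hl] at this
      simpa using this
  have hpex : ∀ i : Fin (p + 1), ∃! l : Fin (P j).n, (P j).edge l ∈ C (i : ℕ) :=
    fun i => huni (i : ℕ) (Nat.lt_succ_iff.mp i.isLt)
  choose pos hmem hun using hpex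
  -- membership in RS before / after the unique cut edge
  have hin : ∀ (i : Fin (p + 1)) (m : Fin ((P j).n + 1)), (m : ℕ) ≤ (pos i : ℕ) →
      (P j).vert m ∈ RS ends (C (i : ℕ)) {s} := by
    intro i m hm
    have hr := reach_along (P j) (C (i : ℕ)) 0 (m : ℕ) (Nat.zero_le _)
      (Nat.lt_succ_iff.mp m.isLt)
      (fun l _ hl2 hlin => by
        have h := hun i l hlin
        have h2 : (l : ℕ) = (pos i : ℕ) := by rw [h]
        omega)
    have h0 : ((⟨0, by omega⟩ : Fin ((P j).n + 1))) = 0 := by ext; simp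
    rw [h0, (P j).vert_zero, Fin.eta] at hr
    exact mem_RS_singleton.mpr hr
  have hout : ∀ (i : Fin (p + 1)) (m : Fin ((P j).n + 1)), (pos i : ℕ) < (m : ℕ) →
      (P j).vert m ∉ RS ends (C (i : ℕ)) {s} := by
    intro i m hm hmem'
    have hr := reach_along (P j) (C (i : ℕ)) (m : ℕ) (P j).n
      (Nat.lt_succ_iff.mp m.isLt) le_rfl
      (fun l hl1 _ hlin => by
        have h := hun i l hlin
        have h2 : (l : ℕ) = (pos i : ℕ) := by rw [h]
        omega)
    have hl : ((⟨(P j).n, by omega⟩ : Fin ((P j).n + 1))) = Fin.last _ := by ext; simp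
    rw [Fin.eta, hl, (P j).vert_last] at hr
    exact not_mem_RS_t (hcut (i : ℕ) (Nat.lt_succ_iff.mp i.isLt))
      (mem_RS_singleton.mpr ((mem_RS_singleton.mp hmem').trans hr))
  -- strict monotonicity of the positions
  have hsm : StrictMono pos := by
    intro i i' hii
    by_contra hle
    push_neg at hle
    have hip : (i' : ℕ) ≤ p := Nat.lt_succ_iff.mp i'.isLt
    have hii' : (i : ℕ) < (i' : ℕ) := hii
    rcases lt_or_eq_of_le hle with hlt | heq
    · have hlt' : (pos i' : ℕ) < (pos i : ℕ) := hlt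
      have h1 : (P j).vert ((pos i').succ) ∈ RS ends (C (i : ℕ)) {s} := by
        apply hin i
        rw [Fin.val_succ]
        omega
      have h2 : (P j).vert ((pos i').succ) ∈ RS ends (C (i' : ℕ)) {s} :=
        hmono (i : ℕ) (i' : ℕ) (le_of_lt hii') hip h1
      have h3 := hout i' ((pos i').succ) (by rw [Fin.val_succ]; omega)
      exact h3 h2
    · have hu : (P j).vert ((pos i).castSucc) ∈ RS ends (C (i : ℕ)) {s} := by
        apply hin i
        rw [Fin.coe_castSucc]
      have hv : (P j).vert ((pos i).succ) ∈ closedNbhd ends (RS ends (C (i : ℕ)) {s}) :=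
        Set.mem_union_right _ ⟨_, hu, (P j).edge (pos i), (P j).ends_eq (pos i)⟩
      have h2 : (P j).vert ((pos i).succ) ∈ RS ends (C (i' : ℕ)) {s} :=
        hnb (i : ℕ) (i' : ℕ) hii' hip hv
      have h3 := hout i' ((pos i).succ) (by
        rw [Fin.val_succ]
        have : (pos i' : ℕ) = (pos i : ℕ) := by rw [heq]
        omega)
      exact h3 h2
  refine ⟨pos, hsm, hmem, hun, ?_⟩
  -- block membership
  intro m
  have hks : {i : Fin (p + 1) | (pos i : ℕ) < (m : ℕ)}.ncard
      = (Finset.univ.filter (fun i : Fin (p + 1) => (pos i : ℕ) < (m : ℕ))).card := by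
    rw [Set.ncard_eq_toFinset_card', Set.toFinset_setOf]
  rw [hks]
  set F := Finset.univ.filter (fun i : Fin (p + 1) => (pos i : ℕ) < (m : ℕ)) with hFdef
  have hle : F.card ≤ p + 1 := by
    have := Finset.card_filter_le (Finset.univ : Finset (Fin (p + 1)))
      (fun i => (pos i : ℕ) < (m : ℕ))
    simpa using this
  have hiff : ∀ i : Fin (p + 1), (i : ℕ) < F.card ↔ (pos i : ℕ) < (m : ℕ) := by
    intro i
    constructor
    · intro hi
      by_contra hnot
      have hsub : F ⊆ Finset.Iio i := by
        intro i' hi'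
        rw [hFdef, Finset.mem_filter] at hi'
        have hlt : (pos i' : ℕ) < (pos i : ℕ) := by omega
        have : pos i' < pos i := hlt
        rw [Finset.mem_Iio]
        exact hsm.lt_iff_lt.mp this
      have := Finset.card_le_card hsub
      rw [Fin.card_Iio] at this
      omega
    · intro hi
      have hsub : Finset.Iic i ⊆ F := by
        intro i' hi'
        rw [Finset.mem_Iic] at hi'
        rw [hFdef, Finset.mem_filter]
        refine ⟨Finset.mem_univ _, ?_⟩
        have h2 : pos i' ≤ pos i := hsm.monotone hi'
        have h3 : (pos i' : ℕ) ≤ (pos i : ℕ) := h2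
        omega
      have := Finset.card_le_card hsub
      rw [Fin.card_Iic] at this
      omega
  rcases Nat.eq_zero_or_pos F.card with h0 | h0
  · rw [h0]
    unfold blockOf
    rw [if_pos rfl]
    have hnot : ¬ ((pos ⟨0, Nat.succ_pos p⟩ : ℕ) < (m : ℕ)) := by
      intro h
      have := (hiff ⟨0, Nat.succ_pos p⟩).mpr h
      omega
    exact hin ⟨0, Nat.succ_pos p⟩ m (by omega)
  · rcases Nat.lt_or_ge F.card (p + 1) with hsp | hsp
    · have hkp : F.card ≤ p := by omega
      have hne : F.card ≠ 0 := by omega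
      unfold blockOf
      rw [if_neg hne, if_pos hkp]
      constructor
      · have hnot : ¬ ((pos ⟨F.card, by omega⟩ : ℕ) < (m : ℕ)) := by
          intro h
          have h2 := (hiff ⟨F.card, by omega⟩).mpr h
          simp only [Fin.val_mk] at h2
          omega
        exact hin ⟨F.card, by omega⟩ m (by omega)
      · have hlt2 : (pos ⟨F.card - 1, by omega⟩ : ℕ) < (m : ℕ) := by
          apply (hiff ⟨F.card - 1, by omega⟩).mp
          simp only [Fin.val_mk]
          omega
        exact hout ⟨F.card - 1, by omega⟩ m hlt2
    · have hk : F.card = p + 1 := le_antisymm hle hsp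
      rw [hk]
      unfold blockOf
      rw [if_neg (by omega), if_neg (by omega)]
      refine ⟨Set.mem_univ _, ?_⟩
      have hlt2 : (pos ⟨p, by omega⟩ : ℕ) < (m : ℕ) := by
        apply (hiff ⟨p, by omega⟩).mp
        simp only [Fin.val_mk]
        omega
      exact hout ⟨p, by omega⟩ m hlt2

end FlowAug
end
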